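/- arXiv:2201.02105 — 3 statements merged into one kernel-verified Lean document; each statement's English description precedes it below -/
import Mathlib

section
/- Let W(u) = (1/π²)(1 + cos(πu)) and define φ(x,y) = (2/π) arctan(x/(y+1)) for (x,y) ∈ ℝ²₊. Then: (i) φ is harmonic in the open half-plane, i.e., ∂ₓₓφ + ∂_{yy}φ = 0 for y > 0; (ii) φ satisfies the nonlinear boundary condition ∂_yφ(x,0) = W'(φ(x,0)) for all x ∈ ℝ (both sides equal −(2/π)·x/(1+x²)); (iii) lim_{x→+∞} φ(x,0) = 1 and lim_{x→−∞} φ(x,0) = −1; (iv) ∂ₓφ(x,0) > 0 for all x; (v) −1 < φ(x,y) < 1 for all (x,y) ∈ ℝ²₊. -/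
/-!
On the boundary `π φ(x,0) = 2 arctan x`, and `sin (2 arctan x) = 2x/(1+x²)` turns
`W'(φ) = -(1/π) sin(πφ)` into `-(2/π) x/(1+x²) = ∂_y φ(x,0)`. For harmonicity write
`g(s,t) = s/(s²+t²)`: then `∂ₓφ = (2/π) g(y+1, x)` and `∂_y φ = -(2/π) g(x, y+1)`, and
`∂_t g(s,t) = -2st/(s²+t²)²` is symmetric in `s, t`, so the two second derivatives cancel.
-/

open Real Filter Set

noncomputable section

/-- Partial derivative in the first (x) variable of `f : ℝ → ℝ → ℝ`. -/
def pdx (f : ℝ → ℝ → ℝ) (x y : ℝ) : ℝ := deriv (fun x' => f x' y) x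

/-- Partial derivative in the second (y) variable. -/
def pdy (f : ℝ → ℝ → ℝ) (x y : ℝ) : ℝ := deriv (fun y' => f x y') y

/-- Second partial derivative in x. -/
def pdxx (f : ℝ → ℝ → ℝ) (x y : ℝ) : ℝ := deriv (fun x' => pdx f x' y) x

/-- Second partial derivative in y. -/
def pdyy (f : ℝ → ℝ → ℝ) (x y : ℝ) : ℝ := deriv (fun y' => pdy f x y') y

/-- The periodic misfit potential `W(u) = (1/π²)(1 + cos(πu))`. -/
def Wpn (u : ℝ) : ℝ := (1 / π ^ 2) * (1 + Real.cos (π * u))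

/-- The explicit metastable transition profile `φ(x,y) = (2/π) arctan(x/(y+1))`. -/
def φpn (x y : ℝ) : ℝ := (2 / π) * Real.arctan (x / (y + 1))

theorem Real.sin_two_mul_arctan (x : ℝ) : sin (2 * arctan x) = 2 * x / (1 + x ^ 2) := by
  rw [sin_two_mul, ← tan_mul_cos (cos_arctan_pos x).ne', tan_arctan]
  linear_combination 2 * x * cos_sq_arctan x

lemma hasDerivAt_arctan_div_const {a : ℝ} (ha : a ≠ 0) (x : ℝ) :
    HasDerivAt (fun t => arctan (t / a)) (a / (a ^ 2 + x ^ 2)) x := by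
  refine ((hasDerivAt_id' x).div_const a).arctan.congr_deriv ?_
  field_simp

lemma hasDerivAt_arctan_const_div {a : ℝ} (ha : a ≠ 0) (x : ℝ) :
    HasDerivAt (fun t => arctan (x / t)) (-(x / (x ^ 2 + a ^ 2))) a := by
  have hdiv : HasDerivAt (fun t => x / t) (x * -(a ^ 2)⁻¹) a := by
    simpa only [div_eq_mul_inv] using (hasDerivAt_inv ha).const_mul x
  refine hdiv.arctan.congr_deriv ?_
  field_simp
  ring

lemma hasDerivAt_div_sq_add_sq {s t : ℝ} (h : s ^ 2 + t ^ 2 ≠ 0) :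
    HasDerivAt (fun u => s / (s ^ 2 + u ^ 2)) (-(2 * s * t) / (s ^ 2 + t ^ 2) ^ 2) t := by
  have hden : HasDerivAt (fun u => s ^ 2 + u ^ 2) (2 * t) t := by
    simpa using ((hasDerivAt_id t).pow 2).const_add (s ^ 2)
  exact ((hasDerivAt_const t s).div hden h).congr_deriv (by ring)

lemma hasDerivAt_Wpn (u : ℝ) : HasDerivAt Wpn (-(1 / π) * sin (π * u)) u := by
  have hcos := ((hasDerivAt_id' u).const_mul π).cos
  refine ((hcos.const_add 1).const_mul (1 / π ^ 2)).congr_deriv ?_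
  field_simp

lemma pdx_φpn {x y : ℝ} (hy : y + 1 ≠ 0) :
    pdx φpn x y = 2 / π * ((y + 1) / ((y + 1) ^ 2 + x ^ 2)) :=
  ((hasDerivAt_arctan_div_const hy x).const_mul (2 / π)).deriv

lemma pdy_φpn {x y : ℝ} (hy : y + 1 ≠ 0) :
    pdy φpn x y = -(2 / π) * (x / (x ^ 2 + (y + 1) ^ 2)) := by
  have h := ((hasDerivAt_arctan_const_div hy x).comp_add_const y 1).const_mul (2 / π)
  exact h.deriv.trans (by ring)

lemma pdxx_φpn {x y : ℝ} (hy : y + 1 ≠ 0) :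
    pdxx φpn x y = 2 / π * (-(2 * (y + 1) * x) / ((y + 1) ^ 2 + x ^ 2) ^ 2) := by
  have hpdx : (fun x' => pdx φpn x' y) = fun x' => 2 / π * ((y + 1) / ((y + 1) ^ 2 + x' ^ 2)) :=
    funext fun x' => pdx_φpn hy
  rw [pdxx, hpdx]
  exact ((hasDerivAt_div_sq_add_sq (by positivity)).const_mul (2 / π)).deriv

lemma pdyy_φpn {x y : ℝ} (hy : y + 1 ≠ 0) :
    pdyy φpn x y = -(2 / π) * (-(2 * x * (y + 1)) / (x ^ 2 + (y + 1) ^ 2) ^ 2) := by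
  have hpdy : (fun y' => pdy φpn x y') =ᶠ[nhds y]
      fun y' => -(2 / π) * (x / (x ^ 2 + (y' + 1) ^ 2)) := by
    filter_upwards [(continuous_add_const (1 : ℝ)).continuousAt.eventually_ne hy] with y' hy'
    exact pdy_φpn hy'
  have h := (hasDerivAt_div_sq_add_sq (s := x) (t := y + 1) (by positivity)).comp_add_const y 1
  exact ((h.const_mul (-(2 / π))).congr_of_eventuallyEq hpdy).deriv

lemma laplacian_φpn {x y : ℝ} (hy : y + 1 ≠ 0) : pdxx φpn x y + pdyy φpn x y = 0 := by
  rw [pdxx_φpn hy, pdyy_φpn hy]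
  ring

lemma φpn_zero_right (x : ℝ) : φpn x 0 = 2 / π * arctan x := by
  simp [φpn]

lemma pdy_φpn_zero_right (x : ℝ) : pdy φpn x 0 = -(2 / π) * (x / (1 + x ^ 2)) := by
  rw [pdy_φpn (by norm_num)]
  ring

lemma deriv_Wpn_φpn_zero_right (x : ℝ) :
    deriv Wpn (φpn x 0) = -(2 / π) * (x / (1 + x ^ 2)) := by
  rw [(hasDerivAt_Wpn _).deriv, φpn_zero_right,
    show π * (2 / π * arctan x) = 2 * arctan x by field_simp, sin_two_mul_arctan]
  ring

lemma tendsto_φpn_zero_right_atTop : Tendsto (fun x => φpn x 0) atTop (nhds 1) := by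
  have h := (tendsto_arctan_atTop.mono_right nhdsWithin_le_nhds).const_mul (2 / π)
  rw [show 2 / π * (π / 2) = 1 by field_simp] at h
  simpa only [φpn_zero_right] using h

lemma tendsto_φpn_zero_right_atBot : Tendsto (fun x => φpn x 0) atBot (nhds (-1)) := by
  have h := (tendsto_arctan_atBot.mono_right nhdsWithin_le_nhds).const_mul (2 / π)
  rw [show 2 / π * -(π / 2) = -1 by field_simp] at h
  simpa only [φpn_zero_right] using h

lemma pdx_φpn_zero_right_pos (x : ℝ) : 0 < pdx φpn x 0 := by
  rw [pdx_φpn (by norm_num)]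
  positivity

lemma φpn_mem_Ioo (x y : ℝ) : φpn x y ∈ Ioo (-1) 1 := by
  obtain ⟨hlo, hhi⟩ := arctan_mem_Ioo (x / (y + 1))
  have hπ : 0 < 2 / π := by positivity
  constructor
  · calc -1 = 2 / π * -(π / 2) := by field_simp
      _ < φpn x y := mul_lt_mul_of_pos_left hlo hπ
  · calc φpn x y < 2 / π * (π / 2) := mul_lt_mul_of_pos_left hhi hπ
      _ = 1 := by field_simp

/-- For `W(u) = (1/π²)(1 + cos(πu))` and `φ(x,y) = (2/π) arctan(x/(y+1))`:
(i) `φ` is harmonic for `y > 0`; (ii) `∂_y φ(x,0) = W'(φ(x,0))`, both sides being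
`-(2/π)·x/(1+x²)`; (iii) `φ(x,0) → ±1` as `x → ±∞`; (iv) `∂ₓφ(x,0) > 0`;
(v) `-1 < φ < 1` on the closed upper half-plane. -/
theorem explicit_profile_is_metastable :
    (∀ x y : ℝ, 0 < y → pdxx φpn x y + pdyy φpn x y = 0) ∧
    (∀ x : ℝ, pdy φpn x 0 = deriv Wpn (φpn x 0) ∧
      deriv Wpn (φpn x 0) = -(2 / π) * (x / (1 + x ^ 2))) ∧
    (Tendsto (fun x => φpn x 0) atTop (nhds 1) ∧
      Tendsto (fun x => φpn x 0) atBot (nhds (-1))) ∧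
    (∀ x : ℝ, 0 < pdx φpn x 0) ∧
    (∀ x y : ℝ, 0 ≤ y → -1 < φpn x y ∧ φpn x y < 1) := by
  refine ⟨fun x y hy => laplacian_φpn (by linarith), fun x => ⟨?_, deriv_Wpn_φpn_zero_right x⟩,
    ⟨tendsto_φpn_zero_right_atTop, tendsto_φpn_zero_right_atBot⟩,
    pdx_φpn_zero_right_pos, fun x y _ => φpn_mem_Ioo x y⟩
  rw [pdy_φpn_zero_right, deriv_Wpn_φpn_zero_right]

end
end

section
/- Let μ > 0 and η ∈ ℝ. Suppose r > 0 and θ ∈ [−π, π) satisfy the system μ − η² + r cos θ + √r cos(θ/2) = 0 and r sin θ + √r sin(θ/2) = 0. Then necessarily θ = 0 and r + √r = η² − μ. In particular, if η² ≤ μ, then no such pair (r, θ) with r > 0 exists, while if η² > μ there is exactly one such pair. -/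
open Real Set

noncomputable section

private lemma key_lemma (μ η : ℝ) :
    ∀ r θ : ℝ, 0 < r → θ ∈ Ico (-π) π →
      μ - η ^ 2 + r * Real.cos θ + Real.sqrt r * Real.cos (θ / 2) = 0 →
      r * Real.sin θ + Real.sqrt r * Real.sin (θ / 2) = 0 →
      θ = 0 ∧ r + Real.sqrt r = η ^ 2 - μ := by
  intro r θ hr hθ h1 h2
  have hsr : 0 < Real.sqrt r := Real.sqrt_pos.2 hr
  have hcos : 0 ≤ Real.cos (θ / 2) := by
    apply Real.cos_nonneg_of_mem_Icc
    constructor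
    · linarith [hθ.1]
    · linarith [hθ.2]
  have hsin : Real.sin (θ / 2) = 0 := by
    have hθeq : Real.sin θ = 2 * Real.sin (θ / 2) * Real.cos (θ / 2) := by
      rw [← Real.sin_two_mul]; ring_nf
    rw [hθeq] at h2
    have hfac : Real.sin (θ / 2) * (2 * r * Real.cos (θ / 2) + Real.sqrt r) = 0 := by
      linarith [h2, mul_comm (Real.sin (θ / 2)) (2 * r * Real.cos (θ / 2))]
    rcases mul_eq_zero.1 hfac with h | h
    · exact h
    · nlinarith
  have hθ0 : θ = 0 := by
    have hpi : 0 < π := Real.pi_pos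
    have h1' : -π < θ / 2 := by linarith [hθ.1]
    have h2' : θ / 2 < π := by linarith [hθ.2]
    have := (Real.sin_eq_zero_iff_of_lt_of_lt h1' h2').1 hsin
    linarith
  refine ⟨hθ0, ?_⟩
  rw [hθ0] at h1
  simp at h1
  linarith

/-- **Location of the roots of `λ + μ + √(λ + η²) = 0`.** Writing `λ = -η² + r e^{iθ}` with
the branch cut along `(-∞, -η²)`: if `r > 0` and `θ ∈ [-π, π)` satisfy
`μ - η² + r cos θ + √r cos(θ/2) = 0` and `r sin θ + √r sin(θ/2) = 0`, then `θ = 0` and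
`r + √r = η² - μ`. In particular, for `η² ≤ μ` there is no such pair `(r, θ)`, while for
`η² > μ` there is exactly one. -/
theorem branch_root_location (μ η : ℝ) (hμ : 0 < μ) :
    (∀ r θ : ℝ, 0 < r → θ ∈ Ico (-π) π →
      μ - η ^ 2 + r * Real.cos θ + Real.sqrt r * Real.cos (θ / 2) = 0 →
      r * Real.sin θ + Real.sqrt r * Real.sin (θ / 2) = 0 →
      θ = 0 ∧ r + Real.sqrt r = η ^ 2 - μ) ∧
    (η ^ 2 ≤ μ → ¬ ∃ r θ : ℝ, 0 < r ∧ θ ∈ Ico (-π) π ∧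
      μ - η ^ 2 + r * Real.cos θ + Real.sqrt r * Real.cos (θ / 2) = 0 ∧
      r * Real.sin θ + Real.sqrt r * Real.sin (θ / 2) = 0) ∧
    (μ < η ^ 2 → ∃! p : ℝ × ℝ, 0 < p.1 ∧ p.2 ∈ Ico (-π) π ∧
      μ - η ^ 2 + p.1 * Real.cos p.2 + Real.sqrt p.1 * Real.cos (p.2 / 2) = 0 ∧
      p.1 * Real.sin p.2 + Real.sqrt p.1 * Real.sin (p.2 / 2) = 0) := by
  refine ⟨key_lemma μ η, ?_, ?_⟩
  · intro hle ⟨r, θ, hr, hθ, h1, h2⟩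
    obtain ⟨-, heq⟩ := key_lemma μ η r θ hr hθ h1 h2
    have := Real.sqrt_pos.2 hr
    linarith
  · intro hlt
    set c : ℝ := η ^ 2 - μ with hc
    have hcpos : 0 < c := by linarith
    set s : ℝ := (-1 + Real.sqrt (1 + 4 * c)) / 2 with hs
    have hsq : Real.sqrt (1 + 4 * c) ^ 2 = 1 + 4 * c := Real.sq_sqrt (by linarith)
    have h1lt : 1 < Real.sqrt (1 + 4 * c) := by
      nlinarith [Real.sqrt_nonneg (1 + 4 * c)]
    have hspos : 0 < s := by rw [hs]; linarith
    have hrpos : 0 < s ^ 2 := by positivity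
    have hsqrt : Real.sqrt (s ^ 2) = s := Real.sqrt_sq hspos.le
    have hsum : s ^ 2 + s = c := by rw [hs]; nlinarith
    have hpi : 0 < π := Real.pi_pos
    refine ⟨(s ^ 2, 0), ⟨hrpos, ⟨show -π ≤ 0 by linarith, hpi⟩,
      ?_, ?_⟩, ?_⟩
    · simp [hsqrt]; linarith
    · simp
    · rintro ⟨r, θ⟩ ⟨hr, hθ, h1, h2⟩
      obtain ⟨hθ0, heq⟩ := key_lemma μ η r θ hr hθ h1 h2
      have hreq : r = s ^ 2 := by
        by_contra hne
        rcases lt_or_gt_of_ne hne with h | h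
        · have := Real.sqrt_le_sqrt h.le
          linarith [hsqrt ▸ this]
        · have := Real.sqrt_le_sqrt h.le
          rw [hsqrt] at this
          linarith
      simp [hreq, hθ0]
end
end

section
/- Let W : ℝ → ℝ be C³ with W, W', W'' bounded, let ψ : ℝ²₊ → ℝ be C², let K ⊂ ℝ² be compact, and let T > 0. Let u : [0,T] × ℝ²₊ → ℝ be C² up to the boundary, satisfying ∂ₜu = Δu for y > 0 and ∂ₜu = ∂_y u − W'(u) on y = 0, and suppose that for every t ∈ [0,T] the function u(t,·,·) − ψ is supported in K. Define the relative energy E(t) := (1/2)∫_{ℝ²₊} (|∇u(t,x,y)|² − |∇ψ(x,y)|²) dx dy + ∫_ℝ (W(u(t,x,0)) − W(ψ(x,0))) dx. Then E is differentiable on (0,T) with E'(t) = −∫_{ℝ²₊} (∂ₜu(t,x,y))² dx dy − ∫_ℝ (∂ₜu(t,x,0))² dx ≤ 0; equivalently, E'(t) = −∫_{ℝ²₊} (Δu)² dx dy − ∫_ℝ (∂_y u(t,x,0) − W'(u(t,x,0)))² dx. -/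
open Real Set MeasureTheory

noncomputable section

/-- The closed upper half-plane, as a subset of `ℝ²`. -/
def upperHalfPlane2 : Set (ℝ × ℝ) := {p : ℝ × ℝ | 0 ≤ p.2}

/-!
Differentiating under the integral sign is legitimate because every time derivative vanishes
off the compact set `K`, where a uniform bound dominates it; symmetry of mixed partials gives
`½ d/dt ∫ |∇u|² = ∫ ∇u · ∇uₜ`. Integrating by parts in `x` over `ℝ` and in `y` over `(0, ∞)`
turns this into `-∫ Δu uₜ - ∫_ℝ u_y uₜ(x, 0)`, the boundary term coming from `y = 0`. Adding
`d/dt ∫ W(u(x, 0)) = ∫ W'(u) uₜ` and substituting `uₜ = Δu` in the bulk and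
`uₜ = u_y - W'(u)` on the boundary gives the dissipation identity.
-/

open Filter Topology

theorem contDiff_deriv_apply {E : Type*} [NormedAddCommGroup E] [NormedSpace ℝ E]
    {n : WithTop ℕ∞} {f : E → ℝ → ℝ} {g : E → ℝ} (hf : ContDiff ℝ (n + 1) (Function.uncurry f))
    (hg : ContDiff ℝ n g) : ContDiff ℝ n fun p => deriv (f p) (g p) :=
  (hf.fderiv_succ hg).clm_apply contDiff_const

section TwoVariables

variable {f : ℝ → ℝ → ℝ}

theorem contDiff_pdx {n : WithTop ℕ∞} (hf : ContDiff ℝ (n + 1) fun p : ℝ × ℝ => f p.1 p.2) :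
    ContDiff ℝ n fun p : ℝ × ℝ => pdx f p.1 p.2 :=
  contDiff_deriv_apply (f := fun p x => f x p.2)
    (hf.comp (contDiff_snd.prodMk (contDiff_snd.comp contDiff_fst))) contDiff_fst

theorem contDiff_pdy {n : WithTop ℕ∞} (hf : ContDiff ℝ (n + 1) fun p : ℝ × ℝ => f p.1 p.2) :
    ContDiff ℝ n fun p : ℝ × ℝ => pdy f p.1 p.2 :=
  contDiff_deriv_apply (f := fun p y => f p.1 y)
    (hf.comp ((contDiff_fst.comp contDiff_fst).prodMk contDiff_snd)) contDiff_snd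

theorem continuous_pdx (hf : ContDiff ℝ 1 fun p : ℝ × ℝ => f p.1 p.2) :
    Continuous fun p : ℝ × ℝ => pdx f p.1 p.2 :=
  (contDiff_pdx (n := 0) (by rwa [zero_add])).continuous

theorem continuous_pdy (hf : ContDiff ℝ 1 fun p : ℝ × ℝ => f p.1 p.2) :
    Continuous fun p : ℝ × ℝ => pdy f p.1 p.2 :=
  (contDiff_pdy (n := 0) (by rwa [zero_add])).continuous

theorem pdx_eq_fderiv {x y : ℝ} (hf : DifferentiableAt ℝ (fun p : ℝ × ℝ => f p.1 p.2) (x, y)) :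
    pdx f x y = fderiv ℝ (fun p : ℝ × ℝ => f p.1 p.2) (x, y) (1, 0) := by
  have h := hf.hasFDerivAt.comp_hasDerivAt x ((hasDerivAt_id x).prodMk (hasDerivAt_const x y))
  exact h.deriv

theorem pdy_eq_fderiv {x y : ℝ} (hf : DifferentiableAt ℝ (fun p : ℝ × ℝ => f p.1 p.2) (x, y)) :
    pdy f x y = fderiv ℝ (fun p : ℝ × ℝ => f p.1 p.2) (x, y) (0, 1) := by
  have h := hf.hasFDerivAt.comp_hasDerivAt y ((hasDerivAt_const y x).prodMk (hasDerivAt_id y))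
  exact h.deriv

theorem pdx_pdy_comm (hf : ContDiff ℝ 2 fun p : ℝ × ℝ => f p.1 p.2) (x y : ℝ) :
    pdx (pdy f) x y = pdy (pdx f) x y := by
  set F := fun p : ℝ × ℝ => f p.1 p.2
  have hF : Differentiable ℝ F := hf.differentiable two_ne_zero
  have hDF : Differentiable ℝ (fderiv ℝ F) :=
    (hf.fderiv_right (m := 1) le_rfl).differentiable one_ne_zero
  have hpdx : (fun p : ℝ × ℝ => pdx f p.1 p.2) = fun p => fderiv ℝ F p (1, 0) :=
    funext fun p => pdx_eq_fderiv (hF p)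
  have hpdy : (fun p : ℝ × ℝ => pdy f p.1 p.2) = fun p => fderiv ℝ F p (0, 1) :=
    funext fun p => pdy_eq_fderiv (hF p)
  have hdiff : ∀ v, DifferentiableAt ℝ (fun p => fderiv ℝ F p v) (x, y) :=
    fun v => (hDF _).clm_apply (differentiableAt_const v)
  rw [pdx_eq_fderiv (by rw [hpdy]; exact hdiff _), pdy_eq_fderiv (by rw [hpdx]; exact hdiff _),
    hpdx, hpdy, fderiv_clm_apply (hDF _) (differentiableAt_const _),
    fderiv_clm_apply (hDF _) (differentiableAt_const _)]
  simpa using hf.contDiffAt.isSymmSndFDerivAt (by simp [minSmoothness_of_isRCLikeNormedField])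
    (1, 0) (0, 1)

theorem hasDerivAt_pdy_left (hf : ContDiff ℝ 2 fun p : ℝ × ℝ => f p.1 p.2) (x y : ℝ) :
    HasDerivAt (fun x' => pdy f x' y) (pdy (pdx f) x y) x := by
  have hfy : ContDiff ℝ 1 fun p : ℝ × ℝ => pdy f p.1 p.2 := contDiff_pdy hf
  rw [← pdx_pdy_comm hf]
  exact ((hfy.differentiable one_ne_zero _).comp x
    (differentiableAt_id.prodMk (differentiableAt_const y))).hasDerivAt

end TwoVariables

section Support

variable {K : Set (ℝ × ℝ)} {f g : ℝ → ℝ → ℝ}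

theorem eventuallyEq_of_eq_off (hK : IsClosed K)
    (hfg : ∀ x y, 0 ≤ y → (x, y) ∉ K → f x y = g x y) {p : ℝ × ℝ} (hp : 0 < p.2) (hpK : p ∉ K) :
    (fun q : ℝ × ℝ => f q.1 q.2) =ᶠ[𝓝 p] fun q => g q.1 q.2 := by
  filter_upwards [((isOpen_lt continuous_const continuous_snd).inter hK.isOpen_compl).mem_nhds
    ⟨hp, hpK⟩] with q hq using hfg q.1 q.2 hq.1.le hq.2

theorem pdx_eq_of_eq_off (hK : IsClosed K) (hfg : ∀ x y, 0 ≤ y → (x, y) ∉ K → f x y = g x y)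
    {x y : ℝ} (hy : 0 < y) (hxy : (x, y) ∉ K) : pdx f x y = pdx g x y :=
  ((eventuallyEq_of_eq_off hK hfg (p := (x, y)) hy hxy).comp_tendsto
    ((continuous_id.prodMk continuous_const).tendsto x)).deriv_eq

theorem pdy_eq_of_eq_off (hK : IsClosed K) (hfg : ∀ x y, 0 ≤ y → (x, y) ∉ K → f x y = g x y)
    {x y : ℝ} (hy : 0 < y) (hxy : (x, y) ∉ K) : pdy f x y = pdy g x y :=
  ((eventuallyEq_of_eq_off hK hfg (p := (x, y)) hy hxy).comp_tendsto
    ((continuous_const.prodMk continuous_id).tendsto y)).deriv_eq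

theorem pdx_eq_zero_of_eq_zero_off (hK : IsClosed K) (hfK : ∀ x y, 0 ≤ y → (x, y) ∉ K → f x y = 0)
    {x y : ℝ} (hy : 0 < y) (hxy : (x, y) ∉ K) : pdx f x y = 0 := by
  rw [pdx_eq_of_eq_off (g := fun _ _ => 0) hK hfK hy hxy, pdx, deriv_const]

theorem pdy_eq_zero_of_eq_zero_off (hK : IsClosed K) (hfK : ∀ x y, 0 ≤ y → (x, y) ∉ K → f x y = 0)
    {x y : ℝ} (hy : 0 < y) (hxy : (x, y) ∉ K) : pdy f x y = 0 := by
  rw [pdy_eq_of_eq_off (g := fun _ _ => 0) hK hfK hy hxy, pdy, deriv_const]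

theorem hasCompactSupport_of_eq_zero_off (hK : IsCompact K)
    (hfK : ∀ x y, 0 ≤ y → (x, y) ∉ K → f x y = 0) {y : ℝ} (hy : 0 ≤ y) :
    HasCompactSupport fun x => f x y :=
  HasCompactSupport.intro (hK.image continuous_fst) fun x hx =>
    hfK x y hy fun hxy => hx ⟨(x, y), hxy, rfl⟩

theorem eventually_eq_zero_of_eq_off (hK : IsCompact K)
    (hfK : ∀ x y, 0 ≤ y → (x, y) ∉ K → f x y = 0) (x : ℝ) :
    (fun y => f x y) =ᶠ[atTop] 0 := by
  obtain ⟨R, hR⟩ := (hK.image continuous_snd).isBounded.bddAbove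
  filter_upwards [eventually_gt_atTop (max R 0)] with y hy
  exact hfK x y ((le_max_right R 0).trans hy.le) fun hxy =>
    ((le_max_left R 0).trans_lt hy).not_ge (hR ⟨(x, y), hxy, rfl⟩)

end Support

def pdt (u : ℝ → ℝ → ℝ → ℝ) (t x y : ℝ) : ℝ := deriv (fun s => u s x y) t

section ThreeVariables

variable {u : ℝ → ℝ → ℝ → ℝ}

theorem contDiff_pdx_family {n : WithTop ℕ∞}
    (hu : ContDiff ℝ (n + 1) fun q : ℝ × ℝ × ℝ => u q.1 q.2.1 q.2.2) :
    ContDiff ℝ n fun q : ℝ × ℝ × ℝ => pdx (u q.1) q.2.1 q.2.2 :=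
  contDiff_deriv_apply (f := fun (q : ℝ × ℝ × ℝ) x => u q.1 x q.2.2)
    (hu.comp (by fun_prop : ContDiff ℝ (n + 1) fun r : (ℝ × ℝ × ℝ) × ℝ => (r.1.1, r.2, r.1.2.2)))
    (g := fun q => q.2.1) (by fun_prop)

theorem contDiff_pdy_family {n : WithTop ℕ∞}
    (hu : ContDiff ℝ (n + 1) fun q : ℝ × ℝ × ℝ => u q.1 q.2.1 q.2.2) :
    ContDiff ℝ n fun q : ℝ × ℝ × ℝ => pdy (u q.1) q.2.1 q.2.2 :=
  contDiff_deriv_apply (f := fun (q : ℝ × ℝ × ℝ) y => u q.1 q.2.1 y)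
    (hu.comp (by fun_prop : ContDiff ℝ (n + 1) fun r : (ℝ × ℝ × ℝ) × ℝ => (r.1.1, r.1.2.1, r.2)))
    (g := fun q => q.2.2) (by fun_prop)

theorem contDiff_pdt {n : WithTop ℕ∞}
    (hu : ContDiff ℝ (n + 1) fun q : ℝ × ℝ × ℝ => u q.1 q.2.1 q.2.2) :
    ContDiff ℝ n fun q : ℝ × ℝ × ℝ => pdt u q.1 q.2.1 q.2.2 :=
  contDiff_deriv_apply (f := fun (q : ℝ × ℝ × ℝ) s => u s q.2.1 q.2.2)
    (hu.comp (by fun_prop : ContDiff ℝ (n + 1) fun r : (ℝ × ℝ × ℝ) × ℝ => (r.2, r.1.2.1, r.1.2.2)))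
    (g := fun q => q.1) (by fun_prop)

theorem hasDerivAt_pdx_family (hu : ContDiff ℝ 2 fun q : ℝ × ℝ × ℝ => u q.1 q.2.1 q.2.2)
    (t x y : ℝ) : HasDerivAt (fun s => pdx (u s) x y) (pdx (pdt u t) x y) t :=
  hasDerivAt_pdy_left (f := fun s x => u s x y)
    (hu.comp (by fun_prop : ContDiff ℝ 2 fun p : ℝ × ℝ => (p.1, p.2, y))) t x

theorem hasDerivAt_pdy_family (hu : ContDiff ℝ 2 fun q : ℝ × ℝ × ℝ => u q.1 q.2.1 q.2.2)
    (t x y : ℝ) : HasDerivAt (fun s => pdy (u s) x y) (pdy (pdt u t) x y) t :=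
  hasDerivAt_pdy_left (f := fun s y => u s x y)
    (hu.comp (by fun_prop : ContDiff ℝ 2 fun p : ℝ × ℝ => (p.1, x, p.2))) t y

theorem pdt_eq_zero_of_eq_off {ψ : ℝ → ℝ → ℝ} {K : Set (ℝ × ℝ)} {I : Set ℝ} (hI : IsOpen I)
    (hsupp : ∀ s ∈ I, ∀ x y, 0 ≤ y → (x, y) ∉ K → u s x y = ψ x y) {t x y : ℝ} (ht : t ∈ I)
    (hy : 0 ≤ y) (hxy : (x, y) ∉ K) : pdt u t x y = 0 := by
  have : (fun s => u s x y) =ᶠ[𝓝 t] fun _ => ψ x y :=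
    eventually_of_mem (hI.mem_nhds ht) fun s hs => hsupp s hs x y hy hxy
  rw [pdt, this.deriv_eq, deriv_const]

end ThreeVariables

theorem ae_snd_ne_zero : ∀ᵐ p : ℝ × ℝ, p.2 ≠ 0 := by
  rw [Measure.volume_eq_prod]
  exact Measure.quasiMeasurePreserving_snd.ae (show ∀ᵐ y : ℝ, y ≠ 0 by simp [ae_iff])

theorem ae_restrict_upperHalfPlane2_snd_pos :
    ∀ᵐ p ∂(volume.restrict upperHalfPlane2), 0 < p.2 := by
  filter_upwards [ae_restrict_of_ae ae_snd_ne_zero,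
    ae_restrict_mem (measurableSet_le measurable_const measurable_snd)] with p hp hp'
  exact lt_of_le_of_ne hp' hp.symm

theorem volume_restrict_upperHalfPlane2 :
    volume.restrict upperHalfPlane2 = (volume : Measure ℝ).prod (volume.restrict (Ici 0)) := by
  have : upperHalfPlane2 = univ ×ˢ Ici 0 := by ext; simp [upperHalfPlane2]
  rw [this, Measure.volume_eq_prod, ← Measure.prod_restrict, Measure.restrict_univ]

theorem integral_upperHalfPlane2_eq_integral_Ici_integral {f : ℝ × ℝ → ℝ}
    (hf : IntegrableOn f upperHalfPlane2) :
    ∫ p in upperHalfPlane2, f p = ∫ y in Ici 0, ∫ x, f (x, y) := by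
  rw [IntegrableOn, volume_restrict_upperHalfPlane2] at hf
  rw [volume_restrict_upperHalfPlane2, integral_prod_symm f hf]

theorem integral_upperHalfPlane2_eq_integral_integral_Ici {f : ℝ × ℝ → ℝ}
    (hf : IntegrableOn f upperHalfPlane2) :
    ∫ p in upperHalfPlane2, f p = ∫ x, ∫ y in Ici 0, f (x, y) := by
  rw [IntegrableOn, volume_restrict_upperHalfPlane2] at hf
  rw [volume_restrict_upperHalfPlane2, integral_prod f hf]

theorem integrable_integral_Ici_of_integrableOn_upperHalfPlane2 {f : ℝ × ℝ → ℝ}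
    (hf : IntegrableOn f upperHalfPlane2) :
    Integrable fun x => ∫ y in Ici 0, f (x, y) := by
  rw [IntegrableOn, volume_restrict_upperHalfPlane2] at hf
  exact hf.integral_prod_left

theorem integrableOn_upperHalfPlane2_of_eq_zero {f : ℝ × ℝ → ℝ} (hf : Continuous f)
    {K : Set (ℝ × ℝ)} (hK : IsCompact K) (hfK : ∀ p : ℝ × ℝ, 0 < p.2 → p ∉ K → f p = 0) :
    IntegrableOn f upperHalfPlane2 := by
  refine (hf.continuousOn.integrableOn_compact hK).of_ae_sdiff_eq_zero
    (measurableSet_le measurable_const measurable_snd).nullMeasurableSet ?_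
  filter_upwards [ae_snd_ne_zero] with p hp hpK
  exact hfK p (lt_of_le_of_ne hpK.1 hp.symm) hpK.2

theorem integral_mul_deriv_eq_neg_of_hasCompactSupport {f g : ℝ → ℝ} (hf : ContDiff ℝ 1 f)
    (hg : ContDiff ℝ 1 g) (hg0 : HasCompactSupport g) :
    ∫ x, f x * deriv g x = -∫ x, deriv f x * g x := by
  have hfd := hf.differentiable one_ne_zero
  have hgd := hg.differentiable one_ne_zero
  exact integral_mul_deriv_eq_deriv_mul_of_integrable (fun x _ => (hfd x).hasDerivAt)
    (fun x _ => (hgd x).hasDerivAt)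
    ((hf.continuous.mul (hg.continuous_deriv le_rfl)).integrable_of_hasCompactSupport
      hg0.deriv.mul_left)
    (((hf.continuous_deriv le_rfl).mul hg.continuous).integrable_of_hasCompactSupport
      hg0.mul_left)
    ((hf.continuous.mul hg.continuous).integrable_of_hasCompactSupport hg0.mul_left)

theorem integrableOn_Ioi_of_eventually_eq_zero {f : ℝ → ℝ} (hf : Continuous f)
    (hf0 : f =ᶠ[atTop] 0) (a : ℝ) : IntegrableOn f (Ioi a) := by
  obtain ⟨R, hR⟩ := eventually_atTop.mp hf0
  refine (hf.continuousOn.integrableOn_compact (isCompact_Icc (a := a) (b := R)))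
    |>.of_forall_sdiff_eq_zero measurableSet_Ioi fun y hy => hR y (le_of_lt ?_)
  by_contra! hyR
  exact hy.2 ⟨hy.1.le, hyR⟩

theorem integral_Ioi_mul_deriv_eq_of_eventually_eq_zero {f g : ℝ → ℝ} (hf : ContDiff ℝ 1 f)
    (hg : ContDiff ℝ 1 g) (hg0 : g =ᶠ[atTop] 0) (a : ℝ) :
    ∫ y in Ioi a, f y * deriv g y = -(f a * g a) - ∫ y in Ioi a, deriv f y * g y := by
  have hfd := hf.differentiable one_ne_zero
  have hgd := hg.differentiable one_ne_zero
  have hg'0 : deriv g =ᶠ[atTop] 0 := by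
    obtain ⟨R, hR⟩ := eventually_atTop.mp hg0
    filter_upwards [eventually_gt_atTop R] with y hy
    have : g =ᶠ[𝓝 y] fun _ => 0 :=
      eventually_of_mem (Ioi_mem_nhds hy) fun z hz => hR z (le_of_lt hz)
    simpa using this.deriv_eq
  have hfg0 : f * g =ᶠ[atTop] 0 := by
    filter_upwards [hg0] with y hy; simp [hy]
  have h := integral_Ioi_mul_deriv_eq_deriv_mul (a := a) (a' := f a * g a) (b' := 0)
    (fun y _ => (hfd y).hasDerivAt) (fun y _ => (hgd y).hasDerivAt)
    (integrableOn_Ioi_of_eventually_eq_zero (hf.continuous.mul (hg.continuous_deriv le_rfl))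
      (by filter_upwards [hg'0] with y hy; simp [hy]) a)
    (integrableOn_Ioi_of_eventually_eq_zero ((hf.continuous_deriv le_rfl).mul hg.continuous)
      (by filter_upwards [hg0] with y hy; simp [hy]) a)
    ((hf.continuous.mul hg.continuous).continuousAt.tendsto.mono_left nhdsWithin_le_nhds)
    (tendsto_const_nhds.congr' hfg0.symm)
  rw [h, zero_sub]

section Green

variable {v φ : ℝ → ℝ → ℝ} {K : Set (ℝ × ℝ)}

theorem integrableOn_upperHalfPlane2_mul_of_eq_zero_off {g : ℝ × ℝ → ℝ} (hg : Continuous g)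
    (hφ : Continuous fun p : ℝ × ℝ => φ p.1 p.2) (hK : IsCompact K)
    (hφK : ∀ x y, 0 ≤ y → (x, y) ∉ K → φ x y = 0) :
    IntegrableOn (fun p : ℝ × ℝ => g p * φ p.1 p.2) upperHalfPlane2 :=
  integrableOn_upperHalfPlane2_of_eq_zero (hg.mul hφ) hK fun p hp hpK => by
    rw [hφK p.1 p.2 hp.le hpK, mul_zero]

theorem integrableOn_upperHalfPlane2_pdx_mul_pdx (hv : ContDiff ℝ 1 fun p : ℝ × ℝ => v p.1 p.2)
    (hφ : ContDiff ℝ 1 fun p : ℝ × ℝ => φ p.1 p.2) (hK : IsCompact K)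
    (hφK : ∀ x y, 0 ≤ y → (x, y) ∉ K → φ x y = 0) :
    IntegrableOn (fun p : ℝ × ℝ => pdx v p.1 p.2 * pdx φ p.1 p.2) upperHalfPlane2 :=
  integrableOn_upperHalfPlane2_of_eq_zero ((continuous_pdx hv).mul (continuous_pdx hφ)) hK
    fun p hp hpK => by rw [pdx_eq_zero_of_eq_zero_off hK.isClosed hφK hp hpK, mul_zero]

theorem integrableOn_upperHalfPlane2_pdy_mul_pdy (hv : ContDiff ℝ 1 fun p : ℝ × ℝ => v p.1 p.2)
    (hφ : ContDiff ℝ 1 fun p : ℝ × ℝ => φ p.1 p.2) (hK : IsCompact K)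
    (hφK : ∀ x y, 0 ≤ y → (x, y) ∉ K → φ x y = 0) :
    IntegrableOn (fun p : ℝ × ℝ => pdy v p.1 p.2 * pdy φ p.1 p.2) upperHalfPlane2 :=
  integrableOn_upperHalfPlane2_of_eq_zero ((continuous_pdy hv).mul (continuous_pdy hφ)) hK
    fun p hp hpK => by rw [pdy_eq_zero_of_eq_zero_off hK.isClosed hφK hp hpK, mul_zero]

variable (hv : ContDiff ℝ 2 fun p : ℝ × ℝ => v p.1 p.2)
  (hφ : ContDiff ℝ 1 fun p : ℝ × ℝ => φ p.1 p.2) (hK : IsCompact K)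
  (hφK : ∀ x y, 0 ≤ y → (x, y) ∉ K → φ x y = 0)
include hv hφ hK hφK

theorem integral_upperHalfPlane2_pdx_mul_pdx :
    ∫ p in upperHalfPlane2, pdx v p.1 p.2 * pdx φ p.1 p.2
      = -∫ p in upperHalfPlane2, pdxx v p.1 p.2 * φ p.1 p.2 := by
  have hvx : ContDiff ℝ 1 fun p : ℝ × ℝ => pdx v p.1 p.2 := contDiff_pdx hv
  have hint : IntegrableOn (fun p : ℝ × ℝ => pdxx v p.1 p.2 * φ p.1 p.2) upperHalfPlane2 :=
    integrableOn_upperHalfPlane2_mul_of_eq_zero_off (continuous_pdx hvx) hφ.continuous hK hφK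
  rw [integral_upperHalfPlane2_eq_integral_Ici_integral
      (integrableOn_upperHalfPlane2_pdx_mul_pdx (hv.of_le one_le_two) hφ hK hφK),
    integral_upperHalfPlane2_eq_integral_Ici_integral hint, ← integral_neg]
  refine setIntegral_congr_fun measurableSet_Ici fun y hy => ?_
  exact integral_mul_deriv_eq_neg_of_hasCompactSupport
    (hvx.comp (contDiff_id.prodMk contDiff_const)) (hφ.comp (contDiff_id.prodMk contDiff_const))
    (hasCompactSupport_of_eq_zero_off hK hφK hy)

theorem integral_upperHalfPlane2_pdy_mul_pdy :
    ∫ p in upperHalfPlane2, pdy v p.1 p.2 * pdy φ p.1 p.2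
      = -(∫ x, pdy v x 0 * φ x 0) - ∫ p in upperHalfPlane2, pdyy v p.1 p.2 * φ p.1 p.2 := by
  have hvy : ContDiff ℝ 1 fun p : ℝ × ℝ => pdy v p.1 p.2 := contDiff_pdy hv
  have hint : IntegrableOn (fun p : ℝ × ℝ => pdyy v p.1 p.2 * φ p.1 p.2) upperHalfPlane2 :=
    integrableOn_upperHalfPlane2_mul_of_eq_zero_off (continuous_pdy hvy) hφ.continuous hK hφK
  have hboundary : Integrable fun x => pdy v x 0 * φ x 0 :=
    ((hvy.continuous.comp (continuous_id.prodMk continuous_const)).mul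
      (hφ.continuous.comp (continuous_id.prodMk continuous_const))).integrable_of_hasCompactSupport
      (hasCompactSupport_of_eq_zero_off hK hφK le_rfl).mul_left
  have hslice : ∀ x, ∫ y in Ici 0, pdy v x y * pdy φ x y
      = -(pdy v x 0 * φ x 0) - ∫ y in Ici 0, pdyy v x y * φ x y := fun x => by
    rw [integral_Ici_eq_integral_Ioi, integral_Ici_eq_integral_Ioi]
    exact integral_Ioi_mul_deriv_eq_of_eventually_eq_zero
      (hvy.comp (contDiff_const.prodMk contDiff_id)) (hφ.comp (contDiff_const.prodMk contDiff_id))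
      (eventually_eq_zero_of_eq_off hK hφK x) 0
  rw [integral_upperHalfPlane2_eq_integral_integral_Ici
      (integrableOn_upperHalfPlane2_pdy_mul_pdy (hv.of_le one_le_two) hφ hK hφK),
    integral_upperHalfPlane2_eq_integral_integral_Ici hint, integral_congr_ae (ae_of_all _ hslice),
    integral_sub hboundary.fun_neg (integrable_integral_Ici_of_integrableOn_upperHalfPlane2 hint),
    integral_neg]

theorem integral_upperHalfPlane2_grad_mul_grad :
    ∫ p in upperHalfPlane2, (pdx v p.1 p.2 * pdx φ p.1 p.2 + pdy v p.1 p.2 * pdy φ p.1 p.2)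
      = -(∫ p in upperHalfPlane2, (pdxx v p.1 p.2 + pdyy v p.1 p.2) * φ p.1 p.2)
        - ∫ x, pdy v x 0 * φ x 0 := by
  have hv1 : ContDiff ℝ 1 fun p : ℝ × ℝ => v p.1 p.2 := hv.of_le one_le_two
  have hxx : IntegrableOn (fun p : ℝ × ℝ => pdxx v p.1 p.2 * φ p.1 p.2) upperHalfPlane2 :=
    integrableOn_upperHalfPlane2_mul_of_eq_zero_off (continuous_pdx (contDiff_pdx hv))
      hφ.continuous hK hφK
  have hyy : IntegrableOn (fun p : ℝ × ℝ => pdyy v p.1 p.2 * φ p.1 p.2) upperHalfPlane2 :=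
    integrableOn_upperHalfPlane2_mul_of_eq_zero_off (continuous_pdy (contDiff_pdy hv))
      hφ.continuous hK hφK
  simp_rw [add_mul]
  rw [integral_add (integrableOn_upperHalfPlane2_pdx_mul_pdx hv1 hφ hK hφK)
      (integrableOn_upperHalfPlane2_pdy_mul_pdy hv1 hφ hK hφK), integral_add hxx hyy,
    integral_upperHalfPlane2_pdx_mul_pdx hv hφ hK hφK,
    integral_upperHalfPlane2_pdy_mul_pdy hv hφ hK hφK]
  ring

end Green

theorem hasDerivAt_integral_of_eq_zero_off_compact {α : Type*} [TopologicalSpace α]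
    [T2Space α] [MeasurableSpace α] [OpensMeasurableSpace α] {μ : Measure α}
    [IsFiniteMeasureOnCompacts μ] {F F' : ℝ → α → ℝ} {K : Set α} (hK : IsCompact K)
    {I : Set ℝ} (hI : IsOpen I) {t : ℝ} (ht : t ∈ I) (hF : ∀ s, Continuous (F s))
    (hFt : Integrable (F t) μ) (hF' : Continuous (Function.uncurry F'))
    (hderiv : ∀ s ∈ I, ∀ p, HasDerivAt (fun s => F s p) (F' s p) s)
    (hF'K : ∀ᵐ p ∂μ, p ∉ K → ∀ s ∈ I, F' s p = 0) :
    HasDerivAt (fun s => ∫ p, F s p ∂μ) (∫ p, F' t p ∂μ) t := by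
  obtain ⟨δ, hδ, hδI⟩ := Metric.isOpen_iff.mp hI t ht
  have hsub : Metric.closedBall t (δ / 2) ⊆ I :=
    (Metric.closedBall_subset_ball (half_lt_self hδ)).trans hδI
  obtain ⟨C, hC⟩ := ((isCompact_closedBall t (δ / 2)).prod hK).exists_bound_of_continuousOn
    hF'.continuousOn
  refine (hasDerivAt_integral_of_dominated_loc_of_deriv_le (bound := K.indicator fun _ => C)
    (Metric.ball_mem_nhds t (half_pos hδ))
    (Eventually.of_forall fun s => (hF s).aestronglyMeasurable)
    hFt (hF'.comp (continuous_const.prodMk continuous_id)).aestronglyMeasurable ?_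
    ((integrableOn_const hK.measure_lt_top.ne).integrable_indicator hK.measurableSet)
    (ae_of_all _ fun p s hs => hderiv s (hsub (Metric.ball_subset_closedBall hs)) p)).2
  filter_upwards [hF'K] with p hp s hs
  have hs' : s ∈ Metric.closedBall t (δ / 2) := Metric.ball_subset_closedBall hs
  by_cases hpK : p ∈ K
  · rw [indicator_of_mem hpK]
    exact hC (s, p) ⟨hs', hpK⟩
  · rw [indicator_of_notMem hpK, hp hpK s (hsub hs'), norm_zero]

theorem hasDerivAt_integral_comp_sub_comp {W : ℝ → ℝ} (hW : ContDiff ℝ 1 W) {w : ℝ → ℝ → ℝ}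
    (hw : ContDiff ℝ 1 fun p : ℝ × ℝ => w p.1 p.2) {g : ℝ → ℝ} (hg : Continuous g) {L : Set ℝ}
    (hL : IsCompact L) {I : Set ℝ} (hI : IsOpen I) {t : ℝ} (ht : t ∈ I)
    (hwg : ∀ s ∈ I, ∀ x ∉ L, w s x = g x) :
    HasDerivAt (fun s => ∫ x, (W (w s x) - W (g x)))
      (∫ x, deriv W (w t x) * pdx w t x) t := by
  have hslice : ∀ s, Continuous (w s) := fun s => hw.continuous.comp (Continuous.prodMk_right s)
  refine hasDerivAt_integral_of_eq_zero_off_compact (F' := fun s x => deriv W (w s x) * pdx w s x)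
    hL hI ht
    (fun s => (hW.continuous.comp (hslice s)).sub (hW.continuous.comp hg))
    ((((hW.continuous.comp (hslice t)).sub (hW.continuous.comp hg))).integrable_of_hasCompactSupport
      (HasCompactSupport.intro hL fun x hx => by simp [hwg t ht x hx]))
    (((hW.continuous_deriv le_rfl).comp hw.continuous).mul (continuous_pdx hw))
    (fun s _ x => ?_) (ae_of_all _ fun x hx s hs => ?_)
  · have hdiff : DifferentiableAt ℝ (fun s => w s x) s :=
      (hw.differentiable one_ne_zero _).comp s
        (differentiableAt_id.prodMk (differentiableAt_const x))
    exact ((hW.differentiable one_ne_zero _).hasDerivAt.comp s hdiff.hasDerivAt).sub_const _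
  · have : (fun s => w s x) =ᶠ[𝓝 s] fun _ => g x :=
      eventually_of_mem (hI.mem_nhds hs) fun s hs => hwg s hs x hx
    simp only [pdx, this.deriv_eq, deriv_const, mul_zero]

theorem hasDerivAt_integral_upperHalfPlane2_grad_sq_sub {u : ℝ → ℝ → ℝ → ℝ}
    (hu : ContDiff ℝ 2 fun q : ℝ × ℝ × ℝ => u q.1 q.2.1 q.2.2) {ψ : ℝ → ℝ → ℝ}
    (hψ : ContDiff ℝ 1 fun p : ℝ × ℝ => ψ p.1 p.2) {K : Set (ℝ × ℝ)} (hK : IsCompact K)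
    {I : Set ℝ} (hI : IsOpen I) {t : ℝ} (ht : t ∈ I)
    (hsupp : ∀ s ∈ I, ∀ x y, 0 ≤ y → (x, y) ∉ K → u s x y = ψ x y) :
    HasDerivAt (fun s => ∫ p in upperHalfPlane2,
        (pdx (u s) p.1 p.2 ^ 2 + pdy (u s) p.1 p.2 ^ 2 - pdx ψ p.1 p.2 ^ 2 - pdy ψ p.1 p.2 ^ 2))
      (∫ p in upperHalfPlane2, 2 * (pdx (u t) p.1 p.2 * pdx (pdt u t) p.1 p.2
        + pdy (u t) p.1 p.2 * pdy (pdt u t) p.1 p.2)) t := by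
  have hux : ContDiff ℝ 1 fun q : ℝ × ℝ × ℝ => pdx (u q.1) q.2.1 q.2.2 := contDiff_pdx_family hu
  have huy : ContDiff ℝ 1 fun q : ℝ × ℝ × ℝ => pdy (u q.1) q.2.1 q.2.2 := contDiff_pdy_family hu
  have hut : ContDiff ℝ (0 + 1) fun q : ℝ × ℝ × ℝ => pdt u q.1 q.2.1 q.2.2 := by
    rw [zero_add]; exact contDiff_pdt hu
  have hF : ∀ s, Continuous fun p : ℝ × ℝ =>
      pdx (u s) p.1 p.2 ^ 2 + pdy (u s) p.1 p.2 ^ 2 - pdx ψ p.1 p.2 ^ 2 - pdy ψ p.1 p.2 ^ 2 :=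
    fun s => ((((hux.continuous.comp (Continuous.prodMk_right s)).pow 2).add
      ((huy.continuous.comp (Continuous.prodMk_right s)).pow 2)).sub
      ((continuous_pdx hψ).pow 2)).sub ((continuous_pdy hψ).pow 2)
  have hF' : Continuous fun q : ℝ × ℝ × ℝ =>
      2 * (pdx (u q.1) q.2.1 q.2.2 * pdx (pdt u q.1) q.2.1 q.2.2
        + pdy (u q.1) q.2.1 q.2.2 * pdy (pdt u q.1) q.2.1 q.2.2) :=
    continuous_const.mul ((hux.continuous.mul (contDiff_pdx_family hut).continuous).add
      (huy.continuous.mul (contDiff_pdy_family hut).continuous))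
  refine hasDerivAt_integral_of_eq_zero_off_compact (F' := fun s (p : ℝ × ℝ) =>
      2 * (pdx (u s) p.1 p.2 * pdx (pdt u s) p.1 p.2 + pdy (u s) p.1 p.2 * pdy (pdt u s) p.1 p.2))
    hK hI ht hF
    (integrableOn_upperHalfPlane2_of_eq_zero (hF t) hK fun p hp hpK => ?_) hF' (fun s _ p => ?_) ?_
  · rw [pdx_eq_of_eq_off hK.isClosed (hsupp t ht) hp hpK,
      pdy_eq_of_eq_off hK.isClosed (hsupp t ht) hp hpK]
    ring
  · refine ((((hasDerivAt_pdx_family hu s p.1 p.2).pow 2).add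
      ((hasDerivAt_pdy_family hu s p.1 p.2).pow 2)).sub_const _).sub_const _ |>.congr_deriv ?_
    simp only [Nat.cast_ofNat]
    ring
  · filter_upwards [ae_restrict_upperHalfPlane2_snd_pos] with p hp hpK s hs
    have hφK := fun x y => pdt_eq_zero_of_eq_off (x := x) (y := y) hI hsupp hs
    simp only [pdx_eq_zero_of_eq_zero_off hK.isClosed hφK hp hpK,
      pdy_eq_zero_of_eq_zero_off hK.isClosed hφK hp hpK, mul_zero, add_zero]

theorem hasDerivAt_energy {W : ℝ → ℝ} (hW : ContDiff ℝ 1 W) {u : ℝ → ℝ → ℝ → ℝ}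
    (hu : ContDiff ℝ 2 fun q : ℝ × ℝ × ℝ => u q.1 q.2.1 q.2.2) {ψ : ℝ → ℝ → ℝ}
    (hψ : ContDiff ℝ 1 fun p : ℝ × ℝ => ψ p.1 p.2) {K : Set (ℝ × ℝ)} (hK : IsCompact K)
    {I : Set ℝ} (hI : IsOpen I) {t : ℝ} (ht : t ∈ I)
    (hsupp : ∀ s ∈ I, ∀ x y, 0 ≤ y → (x, y) ∉ K → u s x y = ψ x y) :
    HasDerivAt
      (fun s => (1/2) * (∫ p in upperHalfPlane2,
          ((pdx (u s) p.1 p.2) ^ 2 + (pdy (u s) p.1 p.2) ^ 2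
            - (pdx ψ p.1 p.2) ^ 2 - (pdy ψ p.1 p.2) ^ 2))
        + ∫ x : ℝ, (W (u s x 0) - W (ψ x 0)))
      (-(∫ p in upperHalfPlane2, (pdxx (u t) p.1 p.2 + pdyy (u t) p.1 p.2) * pdt u t p.1 p.2)
        - ∫ x, (pdy (u t) x 0 - deriv W (u t x 0)) * pdt u t x 0) t := by
  have hφK : ∀ x y, 0 ≤ y → (x, y) ∉ K → pdt u t x y = 0 :=
    fun x y => pdt_eq_zero_of_eq_off hI hsupp ht
  have hbulk := hasDerivAt_integral_upperHalfPlane2_grad_sq_sub hu hψ hK hI ht hsupp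
  have hboundary : HasDerivAt (fun s => ∫ x, (W (u s x 0) - W (ψ x 0)))
      (∫ x, deriv W (u t x 0) * pdt u t x 0) t :=
    hasDerivAt_integral_comp_sub_comp (w := fun s x => u s x 0) hW
      ((hu.of_le one_le_two).comp (by fun_prop : ContDiff ℝ 1 fun p : ℝ × ℝ => (p.1, p.2, (0 : ℝ))))
      (hψ.continuous.comp (continuous_id.prodMk continuous_const)) (hK.image continuous_fst)
      hI ht fun s hs x hx => hsupp s hs x 0 le_rfl fun hxK => hx ⟨(x, 0), hxK, rfl⟩
  have hgreen := integral_upperHalfPlane2_grad_mul_grad (v := u t) (φ := pdt u t)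
    (hu.comp (by fun_prop : ContDiff ℝ 2 fun p : ℝ × ℝ => (t, p.1, p.2)))
    ((contDiff_pdt (n := 1) hu).comp (by fun_prop : ContDiff ℝ 1 fun p : ℝ × ℝ => (t, p.1, p.2)))
    hK hφK
  have hslice : Continuous fun x : ℝ => ((t, x, 0) : ℝ × ℝ × ℝ) := by fun_prop
  have hφ : Continuous fun x => pdt u t x 0 := (contDiff_pdt (n := 1) hu).continuous.comp hslice
  have hφK' : HasCompactSupport fun x => pdt u t x 0 :=
    hasCompactSupport_of_eq_zero_off hK hφK le_rfl
  have huy : Integrable fun x => pdy (u t) x 0 * pdt u t x 0 :=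
    (((contDiff_pdy_family (n := 1) hu).continuous.comp hslice).mul
      hφ).integrable_of_hasCompactSupport hφK'.mul_left
  have hW'u : Integrable fun x => deriv W (u t x 0) * pdt u t x 0 :=
    (((hW.continuous_deriv le_rfl).comp (hu.continuous.comp hslice)).mul
      hφ).integrable_of_hasCompactSupport hφK'.mul_left
  refine ((hbulk.const_mul (1 / 2)).add hboundary).congr_deriv ?_
  simp_rw [sub_mul]
  rw [integral_sub huy hW'u, integral_const_mul, hgreen]
  ring

theorem energy_dissipation_law_general
    (W : ℝ → ℝ) (hW : ContDiff ℝ 3 W)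
    (ψ : ℝ → ℝ → ℝ) (hψ : ContDiff ℝ 2 fun p : ℝ × ℝ => ψ p.1 p.2)
    (K : Set (ℝ × ℝ)) (hK : IsCompact K)
    (T : ℝ)
    (u : ℝ → ℝ → ℝ → ℝ)
    (hu : ContDiff ℝ 2 fun p : ℝ × ℝ × ℝ => u p.1 p.2.1 p.2.2)
    (hbulk : ∀ t ∈ Icc (0:ℝ) T, ∀ x y : ℝ, 0 < y →
      deriv (fun s => u s x y) t = pdxx (u t) x y + pdyy (u t) x y)
    (hbdy : ∀ t ∈ Icc (0:ℝ) T, ∀ x : ℝ,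
      deriv (fun s => u s x 0) t = pdy (u t) x 0 - deriv W (u t x 0))
    (hsupp : ∀ t ∈ Icc (0:ℝ) T, ∀ x y : ℝ, 0 ≤ y → (x, y) ∉ K → u t x y = ψ x y) :
    ∀ t ∈ Ioo (0:ℝ) T,
      HasDerivAt
        (fun s => (1/2) * (∫ p in upperHalfPlane2,
            ((pdx (u s) p.1 p.2) ^ 2 + (pdy (u s) p.1 p.2) ^ 2
              - (pdx ψ p.1 p.2) ^ 2 - (pdy ψ p.1 p.2) ^ 2))
          + ∫ x : ℝ, (W (u s x 0) - W (ψ x 0)))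
        (-(∫ p in upperHalfPlane2, (deriv (fun s' => u s' p.1 p.2) t) ^ 2)
          - ∫ x : ℝ, (deriv (fun s' => u s' x 0) t) ^ 2) t
      ∧ (-(∫ p in upperHalfPlane2, (deriv (fun s' => u s' p.1 p.2) t) ^ 2)
          - ∫ x : ℝ, (deriv (fun s' => u s' x 0) t) ^ 2) ≤ 0
      ∧ (-(∫ p in upperHalfPlane2, (deriv (fun s' => u s' p.1 p.2) t) ^ 2)
          - ∫ x : ℝ, (deriv (fun s' => u s' x 0) t) ^ 2
        = -(∫ p in upperHalfPlane2, (pdxx (u t) p.1 p.2 + pdyy (u t) p.1 p.2) ^ 2)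
          - ∫ x : ℝ, (pdy (u t) x 0 - deriv W (u t x 0)) ^ 2) := by
  intro t ht
  have htI : t ∈ Icc 0 T := Ioo_subset_Icc_self ht
  have hE := hasDerivAt_energy (hW.of_le (by norm_num)) hu (hψ.of_le one_le_two) hK isOpen_Ioo ht
    fun s hs => hsupp s (Ioo_subset_Icc_self hs)
  have hΔ : ∫ p in upperHalfPlane2, (pdxx (u t) p.1 p.2 + pdyy (u t) p.1 p.2) * pdt u t p.1 p.2
      = ∫ p in upperHalfPlane2, pdt u t p.1 p.2 ^ 2 := by
    refine integral_congr_ae ?_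
    filter_upwards [ae_restrict_upperHalfPlane2_snd_pos] with p hp
    rw [← hbulk t htI p.1 p.2 hp, pdt, sq]
  have hΓ : ∫ x, (pdy (u t) x 0 - deriv W (u t x 0)) * pdt u t x 0 = ∫ x, pdt u t x 0 ^ 2 :=
    integral_congr_ae (ae_of_all _ fun x => by simp only [← hbdy t htI x, pdt, sq])
  refine ⟨hE.congr_deriv (by rw [hΔ, hΓ]; rfl), ?_, ?_⟩
  · have hH : 0 ≤ ∫ p in upperHalfPlane2, (deriv (fun s' => u s' p.1 p.2) t) ^ 2 :=
      integral_nonneg fun p => sq_nonneg _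
    have hB : 0 ≤ ∫ x, (deriv (fun s' => u s' x 0) t) ^ 2 := integral_nonneg fun x => sq_nonneg _
    linarith
  · rw [integral_congr_ae (g := fun p : ℝ × ℝ => (pdxx (u t) p.1 p.2 + pdyy (u t) p.1 p.2) ^ 2)]
    · simp only [hbdy t htI]
    · filter_upwards [ae_restrict_upperHalfPlane2_snd_pos] with p hp
      rw [hbulk t htI p.1 p.2 hp]

/-- **Energy dissipation law.** Let `u` solve the bulk–interface system
`∂ₜu = Δu` (`y > 0`), `∂ₜu = ∂_y u - W'(u)` (`y = 0`) on `[0,T]`, with `u(t,·,·) - ψ`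
supported in a fixed compact set `K`. Then the relative Ginzburg–Landau energy
`E(t) = ½∫_{ℝ²₊}(|∇u|² - |∇ψ|²) + ∫_ℝ (W(u(t,x,0)) - W(ψ(x,0))) dx` is differentiable on
`(0,T)` with `E'(t) = -∫_{ℝ²₊}(∂ₜu)² - ∫_ℝ(∂ₜu|_{y=0})² ≤ 0`, and equivalently
`E'(t) = -∫_{ℝ²₊}(Δu)² - ∫_ℝ(∂_y u - W'(u))²` on the boundary. -/
theorem energy_dissipation_law
    (W : ℝ → ℝ) (hW : ContDiff ℝ 3 W)
    (hWb : ∃ C, ∀ x, |W x| ≤ C)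
    (hW'b : ∃ C, ∀ x, |deriv W x| ≤ C)
    (hW''b : ∃ C, ∀ x, |deriv (deriv W) x| ≤ C)
    (ψ : ℝ → ℝ → ℝ) (hψ : ContDiff ℝ 2 fun p : ℝ × ℝ => ψ p.1 p.2)
    (K : Set (ℝ × ℝ)) (hK : IsCompact K)
    (T : ℝ) (hT : 0 < T)
    (u : ℝ → ℝ → ℝ → ℝ)
    (hu : ContDiff ℝ 2 fun p : ℝ × ℝ × ℝ => u p.1 p.2.1 p.2.2)
    (hbulk : ∀ t ∈ Icc (0:ℝ) T, ∀ x y : ℝ, 0 < y →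
      deriv (fun s => u s x y) t = pdxx (u t) x y + pdyy (u t) x y)
    (hbdy : ∀ t ∈ Icc (0:ℝ) T, ∀ x : ℝ,
      deriv (fun s => u s x 0) t = pdy (u t) x 0 - deriv W (u t x 0))
    (hsupp : ∀ t ∈ Icc (0:ℝ) T, ∀ x y : ℝ, 0 ≤ y → (x, y) ∉ K → u t x y = ψ x y) :
    ∀ t ∈ Ioo (0:ℝ) T,
      HasDerivAt
        (fun s => (1/2) * (∫ p in upperHalfPlane2,
            ((pdx (u s) p.1 p.2) ^ 2 + (pdy (u s) p.1 p.2) ^ 2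
              - (pdx ψ p.1 p.2) ^ 2 - (pdy ψ p.1 p.2) ^ 2))
          + ∫ x : ℝ, (W (u s x 0) - W (ψ x 0)))
        (-(∫ p in upperHalfPlane2, (deriv (fun s' => u s' p.1 p.2) t) ^ 2)
          - ∫ x : ℝ, (deriv (fun s' => u s' x 0) t) ^ 2) t
      ∧ (-(∫ p in upperHalfPlane2, (deriv (fun s' => u s' p.1 p.2) t) ^ 2)
          - ∫ x : ℝ, (deriv (fun s' => u s' x 0) t) ^ 2) ≤ 0
      ∧ (-(∫ p in upperHalfPlane2, (deriv (fun s' => u s' p.1 p.2) t) ^ 2)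
          - ∫ x : ℝ, (deriv (fun s' => u s' x 0) t) ^ 2
        = -(∫ p in upperHalfPlane2, (pdxx (u t) p.1 p.2 + pdyy (u t) p.1 p.2) ^ 2)
          - ∫ x : ℝ, (pdy (u t) x 0 - deriv W (u t x 0)) ^ 2) :=
  energy_dissipation_law_general W hW ψ hψ K hK T u hu hbulk hbdy hsupp

end
end
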